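/- Let p be a prime and let f : ℤ_p → ℤ_p be a 1-Lipschitz function. Then f is ergodic with respect to the normalized Haar probability measure μ_p on ℤ_p (i.e., f preserves μ_p and every measurable S ⊆ ℤ_p with f⁻¹(S) = S satisfies μ_p(S) ∈ {0, 1}) if and only if f is transitive modulo p^k for every k ≥ 1. -/

import Mathlib

open MeasureTheory

/-- The map induced by `f : ℤ_[p] → ℤ_[p]` on `ℤ/p^kℤ` (for 1-Lipschitz `f` this is the
well-defined reduction of `f` modulo `p^k`). -/
noncomputable def inducedMod {p : ℕ} [Fact p.Prime] (f : ℤ_[p] → ℤ_[p]) (k : ℕ) :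
    ZMod (p ^ k) → ZMod (p ^ k) :=
  fun z => PadicInt.toZModPow k (f ((z.val : ℤ_[p])))

/-!
A 1-Lipschitz `f` commutes with reduction modulo `p^k`, so `f` pulls a union of balls
`a + p^kℤ_p` back to the union indexed by the preimage under `f mod p^k`, and `μ` of such a
union is `p^{-k}` times the number of residues. If `f` preserves `μ`, then `f mod p^k` preserves
the cardinality of preimages. The orbit `O` of `0` satisfies `O ⊆ (f mod p^k)⁻¹ O`, hence
equality, so the balls over `O` form an invariant set of positive measure, which ergodicity
forces to be all of `ℤ_p`.

Conversely, transitivity modulo `p^(k+1)` makes `0` periodic modulo `p^k`, so each `f mod p^k`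
is a bijection. A finite measure giving equal mass to all balls of each level is a multiple
of `μ`. This applies to `μ ∘ f⁻¹`, so `f` preserves `μ`, and, for an invariant `S`, to
`μ(S ∩ ·)`, whose values on the balls of a level are constant along the orbit of `f mod p^k`;
hence `μ(S ∩ ·) = μ(S) μ`, and `μ(S) = μ(S)²`.
-/

open Function Set ENNReal

theorem Function.surjective_of_mem_periodicPts_of_forall_iterate_eq {α : Type*} {g : α → α}
    {x : α} (hx : x ∈ periodicPts g) (h : ∀ z, ∃ n, g^[n] x = z) : Surjective g := fun z => by
  obtain ⟨n, rfl⟩ := h z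
  obtain ⟨m, hm, hper⟩ := mem_periodicPts.1 hx
  exact periodicPts_subset_range (mk_mem_periodicPts hm (hper.apply_iterate n))

namespace PadicInt

variable {p : ℕ} [Fact p.Prime]

theorem toZModPow_eq_iff_norm_sub_le {k : ℕ} {x y : ℤ_[p]} :
    toZModPow k x = toZModPow k y ↔ ‖x - y‖ ≤ (p : ℝ) ^ (-(k : ℤ)) := by
  rw [norm_le_pow_iff_mem_span_pow, ← ker_toZModPow, RingHom.mem_ker, map_sub, sub_eq_zero]

theorem toZModPow_natCast_val {k : ℕ} (c : ZMod (p ^ k)) :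
    toZModPow k (c.val : ℤ_[p]) = c := by
  rw [map_natCast, ZMod.natCast_zmod_val]

theorem toZModPow_eq_of_le {k j : ℕ} (hkj : k ≤ j) {x y : ℤ_[p]}
    (h : toZModPow j x = toZModPow j y) : toZModPow k x = toZModPow k y := by
  rw [← cast_toZModPow k j hkj, h, cast_toZModPow k j hkj]

theorem preimage_toZModPow_singleton (k : ℕ) (c : ZMod (p ^ k)) :
    toZModPow k ⁻¹' {c} = Metric.closedBall (c.val : ℤ_[p]) ((p : ℝ) ^ (-(k : ℤ))) := by
  ext x
  rw [mem_preimage, mem_singleton_iff, ← toZModPow_natCast_val c, toZModPow_eq_iff_norm_sub_le,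
    toZModPow_natCast_val, Metric.mem_closedBall, dist_eq_norm]

theorem continuous_toZModPow (k : ℕ) : Continuous (toZModPow (p := p) k) :=
  continuous_discrete_rng.2 fun c => by
    rw [preimage_toZModPow_singleton]
    exact IsUltrametricDist.isOpen_closedBall _
      (zpow_ne_zero _ (Nat.cast_ne_zero.2 (Fact.out : p.Prime).ne_zero))

def residueBalls (p : ℕ) [Fact p.Prime] : Set (Set ℤ_[p]) :=
  {s | ∃ (k : ℕ) (c : ZMod (p ^ k)), toZModPow k ⁻¹' {c} = s}

theorem isTopologicalBasis_residueBalls :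
    TopologicalSpace.IsTopologicalBasis (residueBalls p) := by
  refine TopologicalSpace.isTopologicalBasis_of_isOpen_of_nhds ?_ fun x U hxU hU => ?_
  · rintro _ ⟨k, c, rfl⟩
    exact (isOpen_discrete _).preimage (continuous_toZModPow k)
  obtain ⟨ε, hε, hballU⟩ := Metric.isOpen_iff.1 hU x hxU
  obtain ⟨k, hk⟩ := exists_pow_neg_lt p hε
  refine ⟨_, ⟨k, toZModPow k x, rfl⟩, rfl, fun y hy => hballU ?_⟩
  rw [Metric.mem_ball, dist_eq_norm]
  exact (toZModPow_eq_iff_norm_sub_le.1 hy).trans_lt hk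

theorem isPiSystem_residueBalls : IsPiSystem (residueBalls p) := by
  have hmono : ∀ {k j : ℕ} (x : ℤ_[p]), k ≤ j →
      toZModPow j ⁻¹' {toZModPow j x} ⊆ toZModPow k ⁻¹' {toZModPow k x} :=
    fun _ hkj _ hy => toZModPow_eq_of_le hkj hy
  rintro _ ⟨k, _, rfl⟩ _ ⟨j, _, rfl⟩ ⟨x, rfl, rfl⟩
  rcases le_total k j with hkj | hjk
  · exact ⟨j, _, (inter_eq_self_of_subset_right (hmono x hkj)).symm⟩
  · exact ⟨k, _, (inter_eq_self_of_subset_left (hmono x hjk)).symm⟩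

section Measure

variable [MeasurableSpace ℤ_[p]] [BorelSpace ℤ_[p]]

theorem measurableSet_preimage_toZModPow (k : ℕ) (T : Set (ZMod (p ^ k))) :
    MeasurableSet (toZModPow k ⁻¹' T) :=
  ((isOpen_discrete T).preimage (continuous_toZModPow k)).measurableSet

theorem measurableSpace_eq_generateFrom_residueBalls :
    ‹MeasurableSpace ℤ_[p]› = MeasurableSpace.generateFrom (residueBalls p) :=
  BorelSpace.measurable_eq.trans isTopologicalBasis_residueBalls.borel_eq_generateFrom

theorem sum_measure_preimage_toZModPow_singleton (ν : Measure ℤ_[p]) (k : ℕ)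
    (T : Finset (ZMod (p ^ k))) :
    ∑ c ∈ T, ν (toZModPow k ⁻¹' {c}) = ν (toZModPow k ⁻¹' T) :=
  sum_measure_preimage_singleton T fun c _ => measurableSet_preimage_toZModPow k {c}

variable {μ : Measure ℤ_[p]}
  (hμ : ∀ (k : ℕ) (c : ZMod (p ^ k)), μ (toZModPow k ⁻¹' {c}) = ((p : ℝ≥0∞) ^ k)⁻¹)
include hμ

omit [BorelSpace ℤ_[p]] in
theorem isProbabilityMeasure_of_measure_preimage_toZModPow : IsProbabilityMeasure μ := by
  have huniv : toZModPow (p := p) 0 ⁻¹' {0} = univ :=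
    have : Subsingleton (ZMod (p ^ 0)) := ZMod.subsingleton_iff.2 (pow_zero p)
    eq_univ_of_forall fun _ => Subsingleton.elim _ _
  exact ⟨by rw [← huniv, hμ, pow_zero, inv_one]⟩

theorem measure_preimage_toZModPow {k : ℕ} (T : Set (ZMod (p ^ k))) :
    μ (toZModPow k ⁻¹' T) = T.ncard * ((p : ℝ≥0∞) ^ k)⁻¹ := by
  classical
  rw [ncard_eq_toFinset_card', ← T.coe_toFinset, ← sum_measure_preimage_toZModPow_singleton,
    Finset.sum_congr rfl fun c _ => hμ k c, Finset.sum_const, nsmul_eq_mul, T.coe_toFinset]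

theorem measure_preimage_toZModPow_ne_zero {k : ℕ} {T : Set (ZMod (p ^ k))} (hT : T.Nonempty) :
    μ (toZModPow k ⁻¹' T) ≠ 0 := by
  obtain ⟨c, hc⟩ := hT
  rw [measure_preimage_toZModPow hμ]
  exact mul_ne_zero (Nat.cast_ne_zero.2 (ncard_ne_zero_of_mem hc))
    (ENNReal.inv_ne_zero.2 (by finiteness))

theorem eq_smul_of_measure_preimage_toZModPow_singleton_eq (ν : Measure ℤ_[p])
    [IsFiniteMeasure ν]
    (hν : ∀ (k : ℕ) (c d : ZMod (p ^ k)), ν (toZModPow k ⁻¹' {c}) = ν (toZModPow k ⁻¹' {d})) :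
    ν = ν univ • μ := by
  have := isProbabilityMeasure_of_measure_preimage_toZModPow hμ
  refine ext_of_generate_finite _ measurableSpace_eq_generateFrom_residueBalls
    isPiSystem_residueBalls ?_ (by simp)
  rintro _ ⟨k, c, rfl⟩
  have hp : (p : ℝ≥0∞) ^ k ≠ 0 := pow_ne_zero k (Nat.cast_ne_zero.2 (Fact.out : p.Prime).ne_zero)
  have huniv : ν univ = (p : ℝ≥0∞) ^ k * ν (toZModPow k ⁻¹' {c}) := by
    rw [← preimage_univ, ← Finset.coe_univ (α := ZMod (p ^ k)),
      ← sum_measure_preimage_toZModPow_singleton, Finset.sum_congr rfl fun d _ => hν k d c,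
      Finset.sum_const, Finset.card_univ, ZMod.card, nsmul_eq_mul]
    push_cast
    rfl
  rw [Measure.smul_apply, hμ, huniv, smul_eq_mul, mul_comm, ← mul_assoc,
    ENNReal.inv_mul_cancel hp (by finiteness), one_mul]

end Measure

variable {f : ℤ_[p] → ℤ_[p]}

theorem semiconj_toZModPow_inducedMod (hf : LipschitzWith 1 f) (k : ℕ) :
    Semiconj (toZModPow k) f (inducedMod f k) := fun x => by
  rw [inducedMod, toZModPow_eq_iff_norm_sub_le]
  refine le_trans ?_ (toZModPow_eq_iff_norm_sub_le.1 (toZModPow_natCast_val (toZModPow k x)).symm)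
  simpa [dist_eq_norm] using hf.dist_le_mul x (toZModPow k x).val

theorem semiconj_castHom_inducedMod (hf : LipschitzWith 1 f) {k j : ℕ} (hkj : k ≤ j) :
    Semiconj (ZMod.castHom (pow_dvd_pow p hkj) (ZMod (p ^ k)))
      (inducedMod f j) (inducedMod f k) := by
  intro z
  obtain ⟨x, rfl⟩ : ∃ x, toZModPow j x = z := ⟨_, toZModPow_natCast_val z⟩
  simp only [ZMod.castHom_apply, ← semiconj_toZModPow_inducedMod hf j x, cast_toZModPow k j hkj,
    semiconj_toZModPow_inducedMod hf k x]

theorem zero_mem_periodicPts_inducedMod (hf : LipschitzWith 1 f) {k : ℕ}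
    (h : ∀ z : ZMod (p ^ (k + 1)), ∃ n, (inducedMod f (k + 1))^[n] 0 = z) :
    (0 : ZMod (p ^ k)) ∈ periodicPts (inducedMod f k) := by
  -- `p^k` is a nonzero residue modulo `p^(k+1)` that reduces to `0` modulo `p^k`
  obtain ⟨n, hn⟩ := h (p ^ k : ℕ)
  have hne : ((p ^ k : ℕ) : ZMod (p ^ (k + 1))) ≠ 0 := by
    rw [Ne, ZMod.natCast_eq_zero_iff]
    exact (Nat.pow_dvd_pow_iff_le_right (Fact.out : p.Prime).one_lt).not.2 (by omega)
  refine mk_mem_periodicPts (n := n) (Nat.pos_of_ne_zero ?_) ?_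
  · rintro rfl
    exact hne hn.symm
  · have := (semiconj_castHom_inducedMod hf k.le_succ).iterate_right n 0
    rwa [hn, map_zero, map_natCast, ZMod.natCast_self, eq_comm] at this

theorem preimage_preimage_toZModPow (hf : LipschitzWith 1 f) (k : ℕ) (T : Set (ZMod (p ^ k))) :
    f ⁻¹' (toZModPow k ⁻¹' T) = toZModPow k ⁻¹' (inducedMod f k ⁻¹' T) := by
  rw [← preimage_comp, ← preimage_comp, (semiconj_toZModPow_inducedMod hf k).comp_eq]

theorem preimage_preimage_toZModPow_singleton_apply (hf : LipschitzWith 1 f) {k : ℕ}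
    (hinj : Injective (inducedMod f k)) (c : ZMod (p ^ k)) :
    f ⁻¹' (toZModPow k ⁻¹' {inducedMod f k c}) = toZModPow k ⁻¹' {c} := by
  rw [preimage_preimage_toZModPow hf, ← image_singleton, hinj.preimage_image]

variable [MeasurableSpace ℤ_[p]] [BorelSpace ℤ_[p]] {μ : Measure ℤ_[p]}
  (hμ : ∀ (k : ℕ) (c : ZMod (p ^ k)), μ (toZModPow k ⁻¹' {c}) = ((p : ℝ≥0∞) ^ k)⁻¹)
  (hf : LipschitzWith 1 f)
include hμ hf

theorem ncard_preimage_inducedMod (hmp : MeasurePreserving f μ μ) {k : ℕ}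
    (T : Set (ZMod (p ^ k))) : (inducedMod f k ⁻¹' T).ncard = T.ncard := by
  have h := hmp.measure_preimage (measurableSet_preimage_toZModPow k T).nullMeasurableSet
  rw [preimage_preimage_toZModPow hf, measure_preimage_toZModPow hμ, measure_preimage_toZModPow hμ,
    ENNReal.mul_left_inj (ENNReal.inv_ne_zero.2 (by finiteness))
      (ENNReal.inv_ne_top.2 (pow_ne_zero k (Nat.cast_ne_zero.2 (Fact.out : p.Prime).ne_zero)))] at h
  exact_mod_cast h

theorem exists_iterate_inducedMod_eq_of_ergodic (hmp : MeasurePreserving f μ μ)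
    (herg : ∀ S : Set ℤ_[p], MeasurableSet S → f ⁻¹' S = S → μ S = 0 ∨ μ S = 1)
    (k : ℕ) (z : ZMod (p ^ k)) : ∃ n, (inducedMod f k)^[n] 0 = z := by
  have := isProbabilityMeasure_of_measure_preimage_toZModPow hμ
  set O := range fun n => (inducedMod f k)^[n] 0
  have hO : inducedMod f k ⁻¹' O = O :=
    (eq_of_subset_of_ncard_le (by rintro _ ⟨n, rfl⟩; exact ⟨n + 1, iterate_succ_apply' _ n 0⟩)
      (ncard_preimage_inducedMod hμ hf hmp O).le).symm
  have hmeas := measurableSet_preimage_toZModPow k O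
  have hμO : μ (toZModPow k ⁻¹' O) = 1 :=
    (herg _ hmeas (by rw [preimage_preimage_toZModPow hf, hO])).resolve_left
      (measure_preimage_toZModPow_ne_zero hμ ⟨0, 0, rfl⟩)
  by_contra hz
  refine measure_preimage_toZModPow_ne_zero hμ (T := Oᶜ) ⟨z, hz⟩ ?_
  rw [preimage_compl, measure_compl hmeas (measure_ne_top μ _), hμO, measure_univ, tsub_self]

theorem map_eq_self_of_surjective_inducedMod (hsurj : ∀ k, Surjective (inducedMod f k)) :
    μ.map f = μ := by
  have := isProbabilityMeasure_of_measure_preimage_toZModPow hμ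
  have hmeas := hf.continuous.measurable
  have hball : ∀ k (c : ZMod (p ^ k)), μ.map f (toZModPow k ⁻¹' {c}) = ((p : ℝ≥0∞) ^ k)⁻¹ := by
    intro k c
    obtain ⟨c, rfl⟩ := hsurj k c
    rw [Measure.map_apply hmeas (measurableSet_preimage_toZModPow k _),
      preimage_preimage_toZModPow_singleton_apply hf
        (Finite.injective_iff_surjective.2 (hsurj k)), hμ]
  rw [eq_smul_of_measure_preimage_toZModPow_singleton_eq hμ (μ.map f)
      fun k c d => by rw [hball, hball],
    Measure.map_apply hmeas MeasurableSet.univ, preimage_univ, measure_univ, one_smul]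

theorem measure_eq_zero_or_one_of_preimage_eq (hmp : MeasurePreserving f μ μ)
    (hinj : ∀ k, Injective (inducedMod f k))
    (hcov : ∀ k (z : ZMod (p ^ k)), ∃ n, (inducedMod f k)^[n] 0 = z)
    {S : Set ℤ_[p]} (hS : MeasurableSet S) (hfS : f ⁻¹' S = S) : μ S = 0 ∨ μ S = 1 := by
  have := isProbabilityMeasure_of_measure_preimage_toZModPow hμ
  have hconst : ∀ k (c : ZMod (p ^ k)),
      μ.restrict S (toZModPow k ⁻¹' {c}) = μ.restrict S (toZModPow k ⁻¹' {0}) := by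
    intro k c
    let φ := fun c : ZMod (p ^ k) => μ.restrict S (toZModPow k ⁻¹' {c})
    have hφ : φ ∘ inducedMod f k = φ := funext fun c => by
      simp only [φ, comp_apply, Measure.restrict_apply (measurableSet_preimage_toZModPow k _)]
      rw [← hmp.measure_preimage
          ((measurableSet_preimage_toZModPow k _).inter hS).nullMeasurableSet,
        preimage_inter, hfS, preimage_preimage_toZModPow_singleton_apply hf (hinj k)]
    obtain ⟨n, rfl⟩ := hcov k c
    exact congrFun (iterate_invariant hφ n) 0
  have hsmul := eq_smul_of_measure_preimage_toZModPow_singleton_eq hμ (μ.restrict S)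
    fun k c d => (hconst k c).trans (hconst k d).symm
  have hidem : μ S * μ S = μ S * 1 := by
    simpa [Measure.restrict_apply hS, mul_comm] using (congrArg (· S) hsmul).symm
  rcases eq_or_ne (μ S) 0 with h0 | h0
  · exact .inl h0
  · exact .inr ((ENNReal.mul_right_inj h0 (measure_ne_top μ S)).1 hidem)

end PadicInt

open PadicInt

/-- A 1-Lipschitz function `f : ℤ_p → ℤ_p` is ergodic with respect to the normalized Haar
probability measure `μ_p` (which assigns measure `p^{-k}` to every ball `a + p^k ℤ_p`), i.e.
`f` preserves `μ_p` and every measurable `S` with `f ⁻¹' S = S` has measure `0` or `1`,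
if and only if `f` is transitive modulo `p^k` for every `k ≥ 1` (i.e. the orbit of `0` under
the induced map on `ℤ/p^kℤ` is everything). -/
theorem ergodic_iff_transitive_mod
    (p : ℕ) [Fact p.Prime] [MeasurableSpace ℤ_[p]] [BorelSpace ℤ_[p]]
    (μ : Measure ℤ_[p])
    (hμ : ∀ (a : ℤ_[p]) (k : ℕ),
      μ {x : ℤ_[p] | ‖x - a‖ ≤ (p : ℝ) ^ (-(k : ℤ))} = ((p : ENNReal) ^ k)⁻¹)
    (f : ℤ_[p] → ℤ_[p]) (hf : ∀ a b : ℤ_[p], ‖f a - f b‖ ≤ ‖a - b‖) :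
    ((∀ S : Set ℤ_[p], MeasurableSet S → μ (f ⁻¹' S) = μ S) ∧
      (∀ S : Set ℤ_[p], MeasurableSet S → f ⁻¹' S = S → μ S = 0 ∨ μ S = 1)) ↔
      ∀ k : ℕ, 1 ≤ k →
        ∀ z : ZMod (p ^ k), ∃ n : ℕ, (inducedMod f k)^[n] 0 = z := by
  have hball : ∀ k (c : ZMod (p ^ k)), μ (toZModPow k ⁻¹' {c}) = ((p : ℝ≥0∞) ^ k)⁻¹ :=
    fun k c => by
      rw [preimage_toZModPow_singleton, ← hμ c.val k]
      simp only [Metric.closedBall, dist_eq_norm]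
  have hlip : LipschitzWith 1 f := .of_dist_le_mul fun a b => by simpa [dist_eq_norm] using hf a b
  have hmp_iff : (∀ S, MeasurableSet S → μ (f ⁻¹' S) = μ S) ↔ MeasurePreserving f μ μ :=
    ⟨fun h => ⟨hlip.continuous.measurable, Measure.ext fun S hS =>
      (Measure.map_apply hlip.continuous.measurable hS).trans (h S hS)⟩,
      fun h S hS => h.measure_preimage hS.nullMeasurableSet⟩
  rw [hmp_iff]
  constructor
  · rintro ⟨hmp, herg⟩ k - z
    exact exists_iterate_inducedMod_eq_of_ergodic hball hlip hmp herg k z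
  · intro htrans
    have hcov : ∀ k (z : ZMod (p ^ k)), ∃ n, (inducedMod f k)^[n] 0 = z := by
      rintro (_ | k) z
      · exact ⟨0, (ZMod.subsingleton_iff.2 (pow_zero p)).elim _ _⟩
      · exact htrans _ k.succ_pos z
    have hsurj : ∀ k, Surjective (inducedMod f k) := fun k =>
      surjective_of_mem_periodicPts_of_forall_iterate_eq
        (zero_mem_periodicPts_inducedMod hlip (hcov (k + 1))) (hcov k)
    have hmp : MeasurePreserving f μ μ :=
      ⟨hlip.continuous.measurable, map_eq_self_of_surjective_inducedMod hball hlip hsurj⟩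
    have hinj : ∀ k, Injective (inducedMod f k) := fun k =>
      Finite.injective_iff_surjective.2 (hsurj k)
    exact ⟨hmp, fun S hS hfS =>
      measure_eq_zero_or_one_of_preimage_eq hball hlip hmp hinj hcov hS hfS⟩
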